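/- Let X and Y be nonzero normed spaces over ℂ and let E = X ⊕∞ Y be the product X × Y equipped with the norm ‖(x,y)‖ = max(‖x‖, ‖y‖). If (u,v) ∈ E satisfies ‖(u,v)‖ = 1 and n(E; (u,v)) > 0, then ‖u‖ = 1 and ‖v‖ = 1. -/

import Mathlib

/-!
If `‖u‖ < 1`, pick a unit vector `x ∈ X`. For every small scalar `a`, the vector
`(u, v) + a • (x, 0)` still lies in the closed unit ball of `X ⊕∞ Y`, so a state `f` at `(u, v)`
satisfies `‖1 + a f (x, 0)‖ ≤ 1` for all small `a`, which forces `f (x, 0) = 0`. Hence `γ`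
vanishes at the unit vector `(x, 0)`, and `n(E; (u, v)) = 0`. The case `‖v‖ < 1` is symmetric.
-/

/-- `S(X;u)`: the set of norm-one continuous linear functionals attaining value `1` at `u`. -/
def geomStates {X : Type*} [NormedAddCommGroup X] [NormedSpace ℂ X] (u : X) :
    Set (X →L[ℂ] ℂ) :=
  {f | ‖f‖ = 1 ∧ f u = 1}

/-- `γ^u(x) = sup {|f(x)| : f ∈ S(X;u)}`. -/
noncomputable def geomGamma {X : Type*} [NormedAddCommGroup X] [NormedSpace ℂ X]
    (u x : X) : ℝ :=
  sSup {r : ℝ | ∃ f ∈ geomStates u, r = ‖f x‖}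

/-- `n(X;u) = inf {γ^u(x) : ‖x‖ = 1}`. -/
noncomputable def geomN {X : Type*} [NormedAddCommGroup X] [NormedSpace ℂ X] (u : X) : ℝ :=
  sInf {r : ℝ | ∃ x : X, ‖x‖ = 1 ∧ r = geomGamma u x}

section States

variable {E : Type*} [NormedAddCommGroup E] [NormedSpace ℂ E]

lemma geomGamma_nonneg (u x : E) : 0 ≤ geomGamma u x :=
  Real.sSup_nonneg (by rintro r ⟨f, -, rfl⟩; positivity)

lemma geomN_le_geomGamma (u : E) {x : E} (hx : ‖x‖ = 1) : geomN u ≤ geomGamma u x :=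
  csInf_le ⟨0, by rintro r ⟨z, -, rfl⟩; exact geomGamma_nonneg u z⟩ ⟨x, hx, rfl⟩

lemma geomGamma_eq_zero_of_forall_apply_eq_zero {u x : E}
    (h : ∀ f ∈ geomStates u, f x = 0) : geomGamma u x = 0 :=
  le_antisymm (Real.sSup_nonpos (by rintro r ⟨f, hf, rfl⟩; simp [h f hf]))
    (geomGamma_nonneg u x)

/-- Stepping from `u` along `ε • conj (f w) • w` makes `f` take the real value `1 + ε ‖f w‖²`
on a vector of norm at most `1`; the choice `ε = t / (1 + ‖f w‖)` keeps the step length below `t`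
without a case split on `f w = 0`. -/
lemma apply_eq_zero_of_mem_geomStates {u w : E} {f : E →L[ℂ] ℂ} (hf : f ∈ geomStates u)
    {t : ℝ} (ht : 0 < t) (h : ∀ a : ℂ, ‖a‖ ≤ t → ‖u + a • w‖ ≤ 1) : f w = 0 := by
  obtain ⟨hf_norm, hf_u⟩ := hf
  set c := f w
  set ε := t / (1 + ‖c‖)
  have hε : 0 < ε := by positivity
  have ha : ‖(ε : ℂ) * (starRingEnd ℂ) c‖ ≤ t := by
    rw [norm_mul, Complex.norm_conj, Complex.norm_real, Real.norm_of_nonneg hε.le,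
      div_mul_eq_mul_div, div_le_iff₀ (by positivity)]
    nlinarith [norm_nonneg c]
  have hfa : f (u + ((ε : ℂ) * (starRingEnd ℂ) c) • w) = ((1 + ε * ‖c‖ ^ 2 : ℝ) : ℂ) := by
    rw [map_add, map_smul, hf_u, smul_eq_mul, mul_assoc, Complex.conj_mul']
    push_cast; ring
  have hle : 1 + ε * ‖c‖ ^ 2 ≤ 1 := by
    calc 1 + ε * ‖c‖ ^ 2 = ‖f (u + ((ε : ℂ) * (starRingEnd ℂ) c) • w)‖ := by
          rw [hfa, Complex.norm_real, Real.norm_of_nonneg (by positivity)]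
      _ ≤ ‖f‖ * ‖u + ((ε : ℂ) * (starRingEnd ℂ) c) • w‖ := f.le_opNorm _
      _ ≤ 1 := by rw [hf_norm, one_mul]; exact h _ ha
  have hc : ‖c‖ ^ 2 ≤ 0 := by nlinarith
  exact norm_eq_zero.mp (by nlinarith [norm_nonneg c])

lemma geomN_nonpos_of_forall_norm_add_smul_le_one {u w : E} (hw : ‖w‖ = 1) {t : ℝ}
    (ht : 0 < t) (h : ∀ a : ℂ, ‖a‖ ≤ t → ‖u + a • w‖ ≤ 1) : geomN u ≤ 0 :=
  (geomN_le_geomGamma u hw).trans_eq <| geomGamma_eq_zero_of_forall_apply_eq_zero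
    fun _ hf ↦ apply_eq_zero_of_mem_geomStates hf ht h

end States

section ProdLinf

variable {X Y : Type*} [NormedAddCommGroup X] [NormedSpace ℂ X]
  [NormedAddCommGroup Y] [NormedSpace ℂ Y]

lemma geomN_prod_linf_nonpos_of_norm_fst_lt_one [Nontrivial X] {u : X} {v : Y}
    (hu : ‖u‖ < 1) (hv : ‖v‖ ≤ 1) : geomN (WithLp.toLp ⊤ (u, v)) ≤ 0 := by
  obtain ⟨x, hx⟩ := exists_norm_eq X zero_le_one
  refine geomN_nonpos_of_forall_norm_add_smul_le_one (w := WithLp.toLp ⊤ (x, 0))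
    (by simp [hx]) (sub_pos.mpr hu) fun a ha ↦ ?_
  have : ‖u + a • x‖ ≤ 1 := by
    calc ‖u + a • x‖ ≤ ‖u‖ + ‖a‖ := by simpa [norm_smul, hx] using norm_add_le u (a • x)
      _ ≤ 1 := by linarith
  simpa [WithLp.prod_norm_eq_sup] using ⟨this, hv⟩

lemma geomN_prod_linf_nonpos_of_norm_snd_lt_one [Nontrivial Y] {u : X} {v : Y}
    (hu : ‖u‖ ≤ 1) (hv : ‖v‖ < 1) : geomN (WithLp.toLp ⊤ (u, v)) ≤ 0 := by
  obtain ⟨y, hy⟩ := exists_norm_eq Y zero_le_one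
  refine geomN_nonpos_of_forall_norm_add_smul_le_one (w := WithLp.toLp ⊤ (0, y))
    (by simp [hy]) (sub_pos.mpr hv) fun a ha ↦ ?_
  have : ‖v + a • y‖ ≤ 1 := by
    calc ‖v + a • y‖ ≤ ‖v‖ + ‖a‖ := by simpa [norm_smul, hy] using norm_add_le v (a • y)
      _ ≤ 1 := by linarith
  simpa [WithLp.prod_norm_eq_sup] using ⟨hu, this⟩

end ProdLinf

theorem norm_eq_one_of_geomN_pos_prod_linf
    {X Y : Type*} [NormedAddCommGroup X] [NormedSpace ℂ X] [Nontrivial X]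
    [NormedAddCommGroup Y] [NormedSpace ℂ Y] [Nontrivial Y]
    (u : X) (v : Y)
    (huv : ‖(WithLp.equiv ⊤ (X × Y)).symm (u, v)‖ = 1)
    (hn : 0 < geomN ((WithLp.equiv ⊤ (X × Y)).symm (u, v))) :
    ‖u‖ = 1 ∧ ‖v‖ = 1 := by
  have hmax : max ‖u‖ ‖v‖ = 1 := huv
  have hu : ‖u‖ ≤ 1 := hmax ▸ le_max_left _ _
  have hv : ‖v‖ ≤ 1 := hmax ▸ le_max_right _ _
  refine ⟨hu.eq_of_not_lt fun hu' ↦ ?_, hv.eq_of_not_lt fun hv' ↦ ?_⟩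
  · exact hn.not_ge (geomN_prod_linf_nonpos_of_norm_fst_lt_one hu' hv)
  · exact hn.not_ge (geomN_prod_linf_nonpos_of_norm_snd_lt_one hu hv')
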